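/- Let P be an n×r real matrix with orthonormal columns that is μ-incoherent, i.e., every row P⁽ⁱ⁾ of P satisfies ‖P⁽ⁱ⁾‖² ≤ μr/n. Let T ⊆ {1,…,n} with |T| = s and let x ∈ ℝⁿ be any vector supported on T (xᵢ = 0 for i ∉ T). Then (1 − s·μ·r/n)·‖x‖² ≤ ‖(I − PPᵀ)x‖² ≤ ‖x‖². In other words, the projection matrix Ψ := I − PPᵀ satisfies a restricted isometry property at sparsity level s with restricted isometry constant at most s·μ·r/n. -/
import Mathlib


open Matrix

/-- Squared Euclidean norm on `ℝⁿ`. -/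
noncomputable def enormSq {n : ℕ} (v : Fin n → ℝ) : ℝ := ∑ i, (v i) ^ 2

lemma enormSq_eq_dot {n : ℕ} (v : Fin n → ℝ) : enormSq v = v ⬝ᵥ v := by
  simp [enormSq, dotProduct, sq]

lemma dot_mulVec_aux {n r : ℕ} (A : Matrix (Fin n) (Fin r) ℝ)
    (v : Fin n → ℝ) (w : Fin r → ℝ) :
    v ⬝ᵥ A.mulVec w = (Aᵀ.mulVec v) ⬝ᵥ w := by
  rw [Matrix.dotProduct_mulVec, Matrix.mulVec_transpose]

/-- Denseness implies restricted isometry: if `P` is a μ-incoherent basis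
matrix and `x` is supported on a set `T` of size `s`, then
`(1 − sμr/n)‖x‖² ≤ ‖(I − PPᵀ)x‖² ≤ ‖x‖²`. -/
theorem projection_restricted_isometry {n r : ℕ}
    (P : Matrix (Fin n) (Fin r) ℝ) (hP : Pᵀ * P = 1) (μ : ℝ)
    (hincoh : ∀ i : Fin n, (∑ j, (P i j) ^ 2) ≤ μ * r / n)
    (T : Finset (Fin n)) (s : ℕ) (hT : T.card = s)
    (x : Fin n → ℝ) (hx : ∀ i : Fin n, i ∉ T → x i = 0) :
    (1 - s * μ * r / n) * enormSq x ≤ enormSq ((1 - P * Pᵀ).mulVec x) ∧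
    enormSq ((1 - P * Pᵀ).mulVec x) ≤ enormSq x := by
  classical
  set q : Fin r → ℝ := Pᵀ.mulVec x with hq
  have hPq : (P * Pᵀ).mulVec x = P.mulVec q := by
    rw [hq, ← Matrix.mulVec_mulVec]
  have hxq : x ⬝ᵥ P.mulVec q = q ⬝ᵥ q := by
    rw [dot_mulVec_aux, hq]
  have hqPq : P.mulVec q ⬝ᵥ P.mulVec q = q ⬝ᵥ q := by
    rw [dot_mulVec_aux, Matrix.mulVec_mulVec, hP, Matrix.one_mulVec]
  have key : enormSq ((1 - P * Pᵀ).mulVec x) = enormSq x - q ⬝ᵥ q := by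
    rw [Matrix.sub_mulVec, Matrix.one_mulVec, hPq, enormSq_eq_dot, enormSq_eq_dot]
    rw [sub_dotProduct, dotProduct_sub, dotProduct_sub]
    rw [hxq, hqPq, dotProduct_comm (P.mulVec q) x, hxq]
    ring
  have hqq_nonneg : 0 ≤ q ⬝ᵥ q := by
    simp only [dotProduct]
    exact Finset.sum_nonneg fun j _ => mul_self_nonneg _
  -- the support restriction
  have hx_sum : enormSq x = ∑ i ∈ T, (x i) ^ 2 := by
    rw [enormSq]
    rw [← Finset.sum_subset (Finset.subset_univ T)]
    intro i _ hi
    rw [hx i hi]; ring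
  have hx_nonneg : (0:ℝ) ≤ ∑ i ∈ T, (x i) ^ 2 :=
    Finset.sum_nonneg fun i _ => sq_nonneg _
  have hq_restrict : ∀ j, q j = ∑ i ∈ T, P i j * x i := by
    intro j
    rw [hq]
    simp only [Matrix.mulVec, dotProduct, Matrix.transpose_apply]
    rw [← Finset.sum_subset (Finset.subset_univ T)]
    intro i _ hi
    rw [hx i hi]; ring
  have hbound : q ⬝ᵥ q ≤ (s * μ * r / n) * enormSq x := by
    have h1 : q ⬝ᵥ q = ∑ j, (∑ i ∈ T, P i j * x i) ^ 2 := by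
      simp only [dotProduct, ← sq]
      exact Finset.sum_congr rfl fun j _ => by rw [hq_restrict j]
    have h2 : ∀ j, (∑ i ∈ T, P i j * x i) ^ 2 ≤
        (∑ i ∈ T, (P i j) ^ 2) * (∑ i ∈ T, (x i) ^ 2) :=
      fun j => Finset.sum_mul_sq_le_sq_mul_sq T (fun i => P i j) (fun i => x i)
    have h3 : q ⬝ᵥ q ≤ ∑ j, (∑ i ∈ T, (P i j) ^ 2) * (∑ i ∈ T, (x i) ^ 2) := by
      rw [h1]; exact Finset.sum_le_sum fun j _ => h2 j
    have h4 : ∑ j, (∑ i ∈ T, (P i j) ^ 2) * (∑ i ∈ T, (x i) ^ 2)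
        = (∑ i ∈ T, ∑ j, (P i j) ^ 2) * (∑ i ∈ T, (x i) ^ 2) := by
      rw [← Finset.sum_mul, Finset.sum_comm]
    have h5 : (∑ i ∈ T, ∑ j, (P i j) ^ 2) ≤ s * (μ * r / n) := by
      calc (∑ i ∈ T, ∑ j, (P i j) ^ 2) ≤ ∑ i ∈ T, μ * r / n :=
            Finset.sum_le_sum fun i _ => hincoh i
        _ = s * (μ * r / n) := by rw [Finset.sum_const, hT, nsmul_eq_mul]
    calc q ⬝ᵥ q ≤ (∑ i ∈ T, ∑ j, (P i j) ^ 2) * (∑ i ∈ T, (x i) ^ 2) := by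
          rw [← h4]; exact h3
      _ ≤ (s * (μ * r / n)) * (∑ i ∈ T, (x i) ^ 2) :=
          mul_le_mul_of_nonneg_right h5 hx_nonneg
      _ = (s * μ * r / n) * enormSq x := by rw [hx_sum]; ring
  constructor
  · rw [key]
    have hE : (0:ℝ) ≤ enormSq x := by rw [hx_sum]; exact hx_nonneg
    nlinarith [hbound]
  · rw [key]; linarith
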